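/- arXiv:2004.11770 — 2 statements merged into one kernel-verified Lean document; each statement's English description precedes it below -/
import Mathlib

section
/- For every β ∈ (0,2) and all copulas C₁, C₂ on [0,1]^d, S_β(C₁,C₂) ≥ d^{β/2} · ( 2/(β+1) − 2/(β+2) ), and this lower bound is attained for C₁ = C₂ = C⁺, the law of (U,…,U) with U uniform on [0,1]. -/
open MeasureTheory Set

/-- The Euclidean distance `‖x - y‖₂` on `ℝ^d`. -/
noncomputable def dist2 {d : ℕ} (x y : Fin d → ℝ) : ℝ := Real.sqrt (∑ i, (x i - y i) ^ 2)

/-- `S_β(F,G) = ∫∫ ‖x-y‖₂^β F(dx) G(dy)`. -/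
noncomputable def Sb (d : ℕ) (β : ℝ) (F G : Measure (Fin d → ℝ)) : ℝ :=
  ∫ x, ∫ y, dist2 x y ^ β ∂G ∂F

/-- The uniform (Lebesgue) measure on `[0,1]`. -/
noncomputable def uniform01 : Measure ℝ := volume.restrict (Set.Icc 0 1)

/-- A copula: a probability measure on `[0,1]^d` whose one-dimensional coordinate
marginals all equal the uniform measure on `[0,1]`. -/
def IsCopula (d : ℕ) (C : Measure (Fin d → ℝ)) : Prop :=
  IsProbabilityMeasure C ∧ ∀ i : Fin d, Measure.map (fun x => x i) C = uniform01

/-- The upper Fréchet (comonotone) copula `C⁺`: the law of `(U,…,U)` for `U` uniform on `[0,1]`. -/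
noncomputable def CPlus (d : ℕ) : Measure (Fin d → ℝ) :=
  Measure.map (fun u : ℝ => fun _ : Fin d => u) uniform01

/-! ### Auxiliary lemmas -/

theorem aux_rpow_int01 {r : ℝ} (hr : 0 < r) : ∫ u in Icc (0:ℝ) 1, u ^ r = 1 / (r + 1) := by
  rw [integral_Icc_eq_integral_Ioc, ← intervalIntegral.integral_of_le (zero_le_one' ℝ),
    integral_rpow (Or.inl (by linarith))]
  rw [Real.one_rpow, Real.zero_rpow (by positivity : r + 1 ≠ 0), sub_zero]

theorem aux_J_eq {β : ℝ} (hβ : 0 < β) (u : ℝ) (hu : u ∈ Icc (0:ℝ) 1) :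
    ∫ v in Icc (0:ℝ) 1, |u - v| ^ β =
      ((1 - u) ^ (β + 1) + u ^ (β + 1)) / (β + 1) := by
  have hcont : Continuous fun v : ℝ => |u - v| ^ β := by
    apply Continuous.rpow_const (by continuity)
    intro x; exact Or.inr hβ.le
  rw [integral_Icc_eq_integral_Ioc, ← intervalIntegral.integral_of_le (zero_le_one' ℝ)]
  rw [← intervalIntegral.integral_add_adjacent_intervals
      (hcont.intervalIntegrable 0 u) (hcont.intervalIntegrable u 1)]
  have h1 : ∫ v in (0:ℝ)..u, |u - v| ^ β = u ^ (β + 1) / (β + 1) := by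
    rw [intervalIntegral.integral_congr (g := fun v => (u - v) ^ β) ?_]
    · rw [intervalIntegral.integral_comp_sub_left (fun w => w ^ β) u, sub_self, sub_zero,
        integral_rpow (Or.inl (by linarith))]
      rw [Real.zero_rpow (by positivity : β + 1 ≠ 0)]; ring
    · intro v hv
      rw [uIcc_of_le hu.1] at hv
      dsimp only
      rw [abs_of_nonneg (by linarith [hv.2])]
  have h2 : ∫ v in u..1, |u - v| ^ β = (1 - u) ^ (β + 1) / (β + 1) := by
    rw [intervalIntegral.integral_congr (g := fun v => (v - u) ^ β) ?_]
    · rw [intervalIntegral.integral_comp_sub_right (fun w => w ^ β) u, sub_self,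
        integral_rpow (Or.inl (by linarith))]
      rw [Real.zero_rpow (by positivity : β + 1 ≠ 0)]; ring
    · intro v hv
      rw [uIcc_of_le hu.2] at hv
      dsimp only
      rw [abs_of_nonpos (by linarith [hv.1]), neg_sub]
  rw [h1, h2]; ring

noncomputable def Hfun (β : ℝ) (u : ℝ) : ℝ := ((1 - u) ^ (β + 1) + u ^ (β + 1)) / (β + 1)

theorem Hfun_cont {β : ℝ} (hβ : 0 < β) : Continuous (Hfun β) := by
  unfold Hfun
  apply Continuous.div_const
  apply Continuous.add
  · exact Continuous.rpow_const (by continuity) (fun x => Or.inr (by linarith))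
  · exact Continuous.rpow_const continuous_id (fun x => Or.inr (by linarith))

theorem aux_H_int {β : ℝ} (hβ : 0 < β) :
    ∫ u in Icc (0:ℝ) 1, Hfun β u = 2 / ((β + 1) * (β + 2)) := by
  unfold Hfun
  have hb1 : (0:ℝ) < β + 1 := by linarith
  have hb2 : (0:ℝ) < β + 2 := by linarith
  have c1 : Continuous fun u : ℝ => (1 - u) ^ (β + 1) :=
    Continuous.rpow_const (by continuity) (fun x => Or.inr (by linarith))
  have c2 : Continuous fun u : ℝ => u ^ (β + 1) :=
    Continuous.rpow_const continuous_id (fun x => Or.inr (by linarith))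
  have i1 : IntegrableOn (fun u : ℝ => (1 - u) ^ (β + 1)) (Icc 0 1) volume :=
    c1.integrableOn_Icc
  have i2 : IntegrableOn (fun u : ℝ => u ^ (β + 1)) (Icc 0 1) volume :=
    c2.integrableOn_Icc
  rw [integral_div, integral_add i1 i2]
  have e2 : ∫ u in Icc (0:ℝ) 1, u ^ (β + 1) = 1 / (β + 2) := by
    rw [aux_rpow_int01 hb1]; ring_nf
  have e1 : ∫ u in Icc (0:ℝ) 1, (1 - u) ^ (β + 1) = 1 / (β + 2) := by
    rw [integral_Icc_eq_integral_Ioc, ← intervalIntegral.integral_of_le (zero_le_one' ℝ),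
      intervalIntegral.integral_comp_sub_left (fun w => w ^ (β + 1)) 1, sub_self, sub_zero,
      integral_rpow (Or.inl (by linarith))]
    rw [Real.one_rpow, Real.zero_rpow (by positivity : β + 1 + 1 ≠ 0)]
    rw [sub_zero]; ring_nf
  rw [e1, e2]
  field_simp
  ring

theorem aux_K_eq {β : ℝ} (hβ : 0 < β) :
    ∫ u in Icc (0:ℝ) 1, (∫ v in Icc (0:ℝ) 1, |u - v| ^ β) = 2 / ((β + 1) * (β + 2)) := by
  rw [setIntegral_congr_fun measurableSet_Icc (fun u hu => aux_J_eq hβ u hu)]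
  exact aux_H_int hβ

theorem aux_PM {d : ℕ} (hd : 0 < d) {β : ℝ} (hβ0 : 0 < β) (hβ2 : β < 2) (x y : Fin d → ℝ) :
    (d : ℝ) ^ (β / 2 - 1) * ∑ i, |x i - y i| ^ β ≤ dist2 x y ^ β := by
  set p : ℝ := β / 2 with hp
  have hp0 : 0 < p := by positivity
  have hp1 : p < 1 := by rw [hp]; linarith
  have hdR : (0:ℝ) < d := by exact_mod_cast hd
  have hbnn : ∀ i, (0:ℝ) ≤ (x i - y i) ^ 2 := fun i => sq_nonneg _
  have hsum_nn : (0:ℝ) ≤ ∑ i, (x i - y i) ^ 2 := Finset.sum_nonneg fun i _ => hbnn i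
  have e1 : dist2 x y ^ β = (∑ i, (x i - y i) ^ 2) ^ p := by
    rw [dist2, Real.sqrt_eq_rpow, ← Real.rpow_mul hsum_nn]
    congr 1; rw [hp]; ring
  have e2 : ∀ i, |x i - y i| ^ β = ((x i - y i) ^ 2) ^ p := by
    intro i
    rw [← sq_abs, ← Real.rpow_natCast |x i - y i| 2, ← Real.rpow_mul (abs_nonneg _)]
    congr 1
    push_cast
    rw [hp]; ring
  have key : ∑ i, ((x i - y i) ^ 2) ^ p ≤ (d : ℝ) ^ (1 - p) * (∑ i, (x i - y i) ^ 2) ^ p := by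
    have hp' : (1:ℝ) ≤ 1 / p := by
      rw [le_div_iff₀ hp0, one_mul]; exact hp1.le
    have h := Real.arith_mean_le_rpow_mean (p := 1/p) Finset.univ (fun _ => (d:ℝ)⁻¹)
      (fun i => ((x i - y i) ^ 2) ^ p) (fun i _ => by positivity)
      (by simp [Finset.card_univ, mul_inv_cancel₀ hdR.ne'])
      (fun i _ => Real.rpow_nonneg (hbnn i) _) hp'
    have hz : ∀ i : Fin d, ((((x i - y i) ^ 2) ^ p) ^ (1 / p : ℝ)) = (x i - y i) ^ 2 := by
      intro i
      rw [← Real.rpow_mul (hbnn i), mul_one_div, div_self hp0.ne', Real.rpow_one]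
    simp only [hz, one_div_one_div] at h
    rw [← Finset.mul_sum, ← Finset.mul_sum, Real.mul_rpow (by positivity) hsum_nn] at h
    calc ∑ i, ((x i - y i) ^ 2) ^ p
        = (d:ℝ) * ((d:ℝ)⁻¹ * ∑ i, ((x i - y i) ^ 2) ^ p) := by field_simp
      _ ≤ (d:ℝ) * (((d:ℝ)⁻¹) ^ p * (∑ i, (x i - y i) ^ 2) ^ p) :=
          mul_le_mul_of_nonneg_left h hdR.le
      _ = (d:ℝ) ^ (1-p) * (∑ i, (x i - y i) ^ 2) ^ p := by
          rw [Real.inv_rpow hdR.le, Real.rpow_sub hdR, Real.rpow_one, div_eq_mul_inv]; ring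
  calc (d : ℝ) ^ (p - 1) * ∑ i, |x i - y i| ^ β
      = (d : ℝ) ^ (p - 1) * ∑ i, ((x i - y i) ^ 2) ^ p := by
        congr 1; exact Finset.sum_congr rfl fun i _ => e2 i
    _ ≤ (d : ℝ) ^ (p - 1) * ((d : ℝ) ^ (1 - p) * (∑ i, (x i - y i) ^ 2) ^ p) :=
        mul_le_mul_of_nonneg_left key (Real.rpow_nonneg hdR.le _)
    _ = (∑ i, (x i - y i) ^ 2) ^ p := by
        rw [← mul_assoc, ← Real.rpow_add hdR, sub_add_sub_cancel, sub_self, Real.rpow_zero, one_mul]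
    _ = dist2 x y ^ β := e1.symm

theorem dist2_cont {d : ℕ} : Continuous fun q : (Fin d → ℝ) × (Fin d → ℝ) => dist2 q.1 q.2 := by
  unfold dist2
  apply Real.continuous_sqrt.comp
  apply continuous_finset_sum
  intro i _
  exact (((continuous_apply i).comp continuous_fst).sub
    ((continuous_apply i).comp continuous_snd)).pow 2

theorem dist2_rpow_cont {d : ℕ} {β : ℝ} (hβ0 : 0 < β) :
    Continuous fun q : (Fin d → ℝ) × (Fin d → ℝ) => dist2 q.1 q.2 ^ β :=
  dist2_cont.rpow_const fun x => Or.inr hβ0.le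

theorem dist2_rpow_cont_left {d : ℕ} {β : ℝ} (hβ0 : 0 < β) (x : Fin d → ℝ) :
    Continuous fun y : Fin d → ℝ => dist2 x y ^ β := by
  have h := Continuous.comp (dist2_rpow_cont (d := d) hβ0) (Continuous.prodMk_right x)
  simpa [Function.comp_def] using h

theorem dist2_nonneg {d : ℕ} (x y : Fin d → ℝ) : 0 ≤ dist2 x y := Real.sqrt_nonneg _

theorem dist2_bound {d : ℕ} {β : ℝ} (hβ0 : 0 < β) {x y : Fin d → ℝ}
    (hx : ∀ i, x i ∈ Icc (0:ℝ) 1) (hy : ∀ i, y i ∈ Icc (0:ℝ) 1) :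
    dist2 x y ^ β ≤ (d : ℝ) ^ (β / 2) := by
  have h1 : dist2 x y ≤ Real.sqrt d := by
    apply Real.sqrt_le_sqrt
    calc ∑ i, (x i - y i) ^ 2 ≤ ∑ _i : Fin d, (1:ℝ) := by
          apply Finset.sum_le_sum
          intro i _
          rw [← sq_abs]
          apply pow_le_one₀ (abs_nonneg _)
          rw [abs_le]
          constructor <;> [linarith [(hx i).1, (hy i).2]; linarith [(hx i).2, (hy i).1]]
      _ = d := by simp
  calc dist2 x y ^ β ≤ Real.sqrt d ^ β :=
        Real.rpow_le_rpow (dist2_nonneg x y) h1 hβ0.le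
    _ = (d : ℝ) ^ (β / 2) := by
        rw [Real.sqrt_eq_rpow, ← Real.rpow_mul (Nat.cast_nonneg d)]
        congr 1; ring

theorem copula_ae {d : ℕ} {C : Measure (Fin d → ℝ)} (h : IsCopula d C) :
    ∀ᵐ x ∂C, ∀ i, x i ∈ Icc (0:ℝ) 1 := by
  rw [ae_all_iff]
  intro i
  have hmeas : Measurable fun x : Fin d → ℝ => x i := measurable_pi_apply i
  rw [ae_iff]
  have : {x : Fin d → ℝ | ¬ x i ∈ Icc (0:ℝ) 1} = (fun x : Fin d → ℝ => x i) ⁻¹' (Icc 0 1)ᶜ := rfl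
  rw [this, ← Measure.map_apply hmeas (measurableSet_Icc.compl), h.2 i, uniform01,
    Measure.restrict_apply measurableSet_Icc.compl, compl_inter_self, measure_empty]

theorem Sb_nonneg (d : ℕ) (β : ℝ) (F G : Measure (Fin d → ℝ)) : 0 ≤ Sb d β F G := by
  apply integral_nonneg
  intro x
  apply integral_nonneg
  intro y
  exact Real.rpow_nonneg (dist2_nonneg x y) β

instance : SFinite uniform01 := by
  unfold uniform01; infer_instance

instance : IsProbabilityMeasure uniform01 := by
  constructor
  unfold uniform01
  simp [Real.volume_Icc]

/-! ### Main theorem -/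

/-- for copulas, `S_β(C₁,C₂) ≥ d^{β/2}(2/(β+1) - 2/(β+2))`, with equality
attained at `C₁ = C₂ = C⁺`. -/
theorem stmt4 (d : ℕ) (β : ℝ) (hβ0 : 0 < β) (hβ2 : β < 2)
    (C1 C2 : Measure (Fin d → ℝ)) (h1 : IsCopula d C1) (h2 : IsCopula d C2) :
    (d : ℝ) ^ (β / 2) * (2 / (β + 1) - 2 / (β + 2)) ≤ Sb d β C1 C2 ∧
      Sb d β (CPlus d) (CPlus d) = (d : ℝ) ^ (β / 2) * (2 / (β + 1) - 2 / (β + 2)) := by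
  haveI hP1 : IsProbabilityMeasure C1 := h1.1
  haveI hP2 : IsProbabilityMeasure C2 := h2.1
  have hb1 : (0:ℝ) < β + 1 := by linarith
  have hb2 : (0:ℝ) < β + 2 := by linarith
  have hKform : 2 / (β + 1) - 2 / (β + 2) = 2 / ((β + 1) * (β + 2)) := by
    field_simp; ring
  set K : ℝ := 2 / ((β + 1) * (β + 2)) with hK
  rw [hKform]
  -- the function J
  set J : ℝ → ℝ := fun u => ∫ v in Icc (0:ℝ) 1, |u - v| ^ β with hJ
  have habs_cont : Continuous fun q : ℝ × ℝ => |q.1 - q.2| ^ β :=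
    Continuous.rpow_const (continuous_fst.sub continuous_snd).abs fun x => Or.inr hβ0.le
  have hJsm : StronglyMeasurable J := by
    apply StronglyMeasurable.integral_prod_right' (f := fun q : ℝ × ℝ => |q.1 - q.2| ^ β)
    exact habs_cont.stronglyMeasurable
  have hJnonneg : ∀ u, 0 ≤ J u := fun u =>
    integral_nonneg fun v => Real.rpow_nonneg (abs_nonneg _) β
  have hJbound : ∀ u ∈ Icc (0:ℝ) 1, J u ≤ 1 := by
    intro u hu
    have : J u ≤ ∫ _v in Icc (0:ℝ) 1, (1:ℝ) := by
      apply setIntegral_mono_on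
      · exact (habs_cont.comp (Continuous.prodMk_right u)).integrableOn_Icc
      · exact integrableOn_const (by simp [Real.volume_Icc])
      · exact measurableSet_Icc
      · intro v hv
        apply Real.rpow_le_one (abs_nonneg _) _ hβ0.le
        rw [abs_le]
        constructor <;> [linarith [hu.1, hv.2]; linarith [hu.2, hv.1]]
    simpa [Real.volume_Icc] using this
  have hJK : ∫ u in Icc (0:ℝ) 1, J u = K := aux_K_eq hβ0
  constructor
  · -- lower bound
    rcases Nat.eq_zero_or_pos d with hd | hd
    · subst hd
      rw [Nat.cast_zero, Real.zero_rpow (by positivity : β / 2 ≠ 0), zero_mul]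
      exact Sb_nonneg 0 β C1 C2
    have hdR : (0:ℝ) < d := by exact_mod_cast hd
    have ae1 := copula_ae h1
    have ae2 := copula_ae h2
    set c : ℝ := (d:ℝ) ^ (β / 2 - 1) with hc
    have hc0 : 0 ≤ c := Real.rpow_nonneg hdR.le _
    -- coordinate-wise integrability over C2
    have hcont_coord : ∀ (i : Fin d) (x : Fin d → ℝ),
        Continuous fun y : Fin d → ℝ => |x i - y i| ^ β := by
      intro i x
      exact Continuous.rpow_const (continuous_const.sub (continuous_apply i)).abs
        fun z => Or.inr hβ0.le
    have hint_coord : ∀ (i : Fin d) (x : Fin d → ℝ), (∀ j, x j ∈ Icc (0:ℝ) 1) →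
        Integrable (fun y => |x i - y i| ^ β) C2 := by
      intro i x hx
      apply Integrable.mono' (integrable_const (1:ℝ))
        (hcont_coord i x).aestronglyMeasurable
      filter_upwards [ae2] with y hy
      rw [Real.norm_eq_abs, abs_of_nonneg (Real.rpow_nonneg (abs_nonneg _) _)]
      apply Real.rpow_le_one (abs_nonneg _) _ hβ0.le
      rw [abs_le]
      constructor <;> [linarith [(hx i).1, (hy i).2]; linarith [(hx i).2, (hy i).1]]
    -- the coordinate integral over C2 equals J (x i)
    have hcoordJ : ∀ (i : Fin d) (x : Fin d → ℝ),
        ∫ y, |x i - y i| ^ β ∂C2 = J (x i) := by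
      intro i x
      have := integral_map_of_stronglyMeasurable (μ := C2) (φ := fun y : Fin d → ℝ => y i)
        (f := fun v => |x i - v| ^ β) (measurable_pi_apply i)
        (Continuous.stronglyMeasurable (Continuous.rpow_const
          (continuous_const.sub continuous_id).abs fun z => Or.inr hβ0.le))
      rw [h2.2 i] at this
      rw [← this]
      rfl
    -- integrability of dist2 ^ β over C2 for good x
    have hint_dist : ∀ x : Fin d → ℝ, (∀ j, x j ∈ Icc (0:ℝ) 1) →
        Integrable (fun y => dist2 x y ^ β) C2 := by
      intro x hx
      apply Integrable.mono' (integrable_const ((d:ℝ) ^ (β/2)))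
        (dist2_rpow_cont_left hβ0 x).aestronglyMeasurable
      filter_upwards [ae2] with y hy
      rw [Real.norm_eq_abs, abs_of_nonneg (Real.rpow_nonneg (dist2_nonneg x y) _)]
      exact dist2_bound hβ0 hx hy
    -- inner inequality, a.e. in x
    have inner_ineq : ∀ᵐ x ∂C1, c * ∑ i, J (x i) ≤ ∫ y, dist2 x y ^ β ∂C2 := by
      filter_upwards [ae1] with x hx
      have e : c * ∑ i, J (x i) = ∫ y, c * ∑ i, |x i - y i| ^ β ∂C2 := by
        rw [integral_const_mul]
        congr 1
        rw [integral_finset_sum Finset.univ (fun i _ => hint_coord i x hx)]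
        exact Finset.sum_congr rfl fun i _ => (hcoordJ i x).symm
      rw [e]
      apply integral_mono_ae
      · exact ((integrable_finset_sum Finset.univ
          (fun i _ => hint_coord i x hx)).const_mul c)
      · exact hint_dist x hx
      · filter_upwards with y
        exact aux_PM hd hβ0 hβ2 x y
    -- integrability of the two integrands over C1
    have hJxi_int : ∀ i : Fin d, Integrable (fun x : Fin d → ℝ => J (x i)) C1 := by
      intro i
      apply Integrable.mono' (integrable_const (1:ℝ))
        ((hJsm.comp_measurable (measurable_pi_apply i)).aestronglyMeasurable)
      filter_upwards [copula_ae h1] with x hx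
      simp only [Function.comp_apply]
      rw [Real.norm_eq_abs, abs_of_nonneg (hJnonneg _)]
      exact hJbound _ (hx i)
    have hG_int : Integrable (fun x : Fin d → ℝ => c * ∑ i, J (x i)) C1 :=
      (integrable_finset_sum Finset.univ (fun i _ => hJxi_int i)).const_mul c
    have hF_meas : AEStronglyMeasurable (fun x : Fin d → ℝ => ∫ y, dist2 x y ^ β ∂C2) C1 := by
      exact (StronglyMeasurable.integral_prod_right'
        ((dist2_rpow_cont hβ0).stronglyMeasurable)).aestronglyMeasurable
    have hF_int : Integrable (fun x : Fin d → ℝ => ∫ y, dist2 x y ^ β ∂C2) C1 := by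
      apply Integrable.mono' (integrable_const ((d:ℝ) ^ (β/2))) hF_meas
      filter_upwards [copula_ae h1] with x hx
      rw [Real.norm_eq_abs, abs_of_nonneg (integral_nonneg fun y =>
        Real.rpow_nonneg (dist2_nonneg x y) β)]
      calc ∫ y, dist2 x y ^ β ∂C2 ≤ ∫ _y, (d:ℝ) ^ (β/2) ∂C2 := by
            apply integral_mono_ae (hint_dist x hx) (integrable_const _)
            filter_upwards [ae2] with y hy
            exact dist2_bound hβ0 hx hy
        _ = (d:ℝ) ^ (β/2) := by simp
    -- compute ∫ c * ∑ J (x i) ∂C1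
    have hJint_C1 : ∀ i : Fin d, ∫ x, J (x i) ∂C1 = K := by
      intro i
      have e1 : ∫ x, J (x i) ∂C1 = ∫ x, Hfun β (x i) ∂C1 := by
        apply integral_congr_ae
        filter_upwards [copula_ae h1] with x hx
        exact aux_J_eq hβ0 _ (hx i)
      have e2 : ∫ x, Hfun β (x i) ∂C1 = ∫ u, Hfun β u ∂uniform01 := by
        have := integral_map_of_stronglyMeasurable (μ := C1) (φ := fun x : Fin d → ℝ => x i)
          (f := Hfun β) (measurable_pi_apply i) (Hfun_cont hβ0).stronglyMeasurable
        rw [h1.2 i] at this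
        rw [← this]
      rw [e1, e2]
      exact aux_H_int hβ0
    have hGval : ∫ x, (c * ∑ i, J (x i)) ∂C1 = (d:ℝ) ^ (β/2) * K := by
      rw [integral_const_mul, integral_finset_sum Finset.univ (fun i _ => hJxi_int i)]
      have : ∑ i : Fin d, ∫ x, J (x i) ∂C1 = (d:ℝ) * K := by
        rw [Finset.sum_congr rfl fun i _ => hJint_C1 i]
        simp [Finset.card_univ, mul_comm]
      rw [this, ← mul_assoc]
      congr 1
      calc c * (d:ℝ) = (d:ℝ) ^ (β/2-1) * (d:ℝ) ^ (1:ℝ) := by rw [hc, Real.rpow_one]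
        _ = (d:ℝ) ^ (β/2) := by rw [← Real.rpow_add hdR]; norm_num
    calc (d:ℝ) ^ (β/2) * K = ∫ x, (c * ∑ i, J (x i)) ∂C1 := hGval.symm
      _ ≤ ∫ x, (∫ y, dist2 x y ^ β ∂C2) ∂C1 := integral_mono_ae hG_int hF_int inner_ineq
      _ = Sb d β C1 C2 := rfl
  · -- equality for CPlus
    have hT : Measurable (fun u : ℝ => fun _ : Fin d => u) :=
      measurable_pi_lambda _ fun _ => measurable_id
    have stepA : ∀ x : Fin d → ℝ,
        ∫ y, dist2 x y ^ β ∂(CPlus d) = ∫ v, dist2 x (fun _ => v) ^ β ∂uniform01 := by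
      intro x
      exact integral_map_of_stronglyMeasurable hT
        (dist2_rpow_cont_left hβ0 x).stronglyMeasurable
    have hg_sm : StronglyMeasurable fun x : Fin d → ℝ =>
        ∫ v, dist2 x (fun _ => v) ^ β ∂uniform01 := by
      apply StronglyMeasurable.integral_prod_right'
        (f := fun q : (Fin d → ℝ) × ℝ => dist2 q.1 (fun _ => q.2) ^ β)
      apply Continuous.stronglyMeasurable
      have hpair : Continuous fun q : (Fin d → ℝ) × ℝ => ((q.1, fun _ : Fin d => q.2) :
          (Fin d → ℝ) × (Fin d → ℝ)) :=
        continuous_fst.prodMk (continuous_pi fun _ => continuous_snd)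
      have h := Continuous.comp (dist2_rpow_cont (d := d) hβ0) hpair
      simpa [Function.comp_def] using h
    have stepB : Sb d β (CPlus d) (CPlus d)
        = ∫ u, (∫ v, dist2 (fun _ : Fin d => u) (fun _ : Fin d => v) ^ β ∂uniform01) ∂uniform01 := by
      rw [Sb]
      rw [integral_congr_ae (Filter.Eventually.of_forall fun x => stepA x)]
      exact integral_map_of_stronglyMeasurable hT hg_sm
    have hdd : ∀ u v : ℝ, dist2 (fun _ : Fin d => u) (fun _ : Fin d => v) ^ β
        = (d:ℝ) ^ (β/2) * |u - v| ^ β := by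
      intro u v
      have : dist2 (fun _ : Fin d => u) (fun _ : Fin d => v) = Real.sqrt d * |u - v| := by
        rw [dist2]
        simp only [Finset.sum_const, Finset.card_univ, Fintype.card_fin, nsmul_eq_mul]
        rw [Real.sqrt_mul (Nat.cast_nonneg d), Real.sqrt_sq_eq_abs]
      rw [this, Real.mul_rpow (Real.sqrt_nonneg _) (abs_nonneg _)]
      congr 1
      rw [Real.sqrt_eq_rpow, ← Real.rpow_mul (Nat.cast_nonneg d)]
      congr 1; ring
    rw [stepB]
    have : ∀ u : ℝ, (∫ v, dist2 (fun _ : Fin d => u) (fun _ : Fin d => v) ^ β ∂uniform01)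
        = (d:ℝ) ^ (β/2) * J u := by
      intro u
      rw [hJ]
      simp only [hdd]
      rw [integral_const_mul]
      rfl
    rw [integral_congr_ae (Filter.Eventually.of_forall this), integral_const_mul]
    have : (∫ u, J u ∂uniform01) = K := hJK
    rw [this]
end

section
/- For every β ∈ (0,2) and every copula C on [0,1]^d, S_β(C, 0) ≥ S_β(C⁺, 0), where 0 = (0,…,0) ∈ ℝ^d and C⁺ is the law of (U,…,U) for U uniform on [0,1]; i.e., the function C ↦ S_β(C, 0) attains its minimum over all copulas at the upper Fréchet bound C⁺. -/
open MeasureTheory Set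

/-- `S_β(C,y) = ∫ ‖x-y‖₂^β C(dx)` for an observation `y`. -/
noncomputable def SbY (d : ℕ) (β : ℝ) (C : Measure (Fin d → ℝ)) (y : Fin d → ℝ) : ℝ :=
  ∫ x, dist2 x y ^ β ∂C

lemma uniform01_ae_mem : ∀ᵐ u ∂uniform01, u ∈ Icc (0:ℝ) 1 :=
  ae_restrict_mem measurableSet_Icc

lemma meas_rpow {β : ℝ} (hβ : 0 ≤ β) : Measurable fun u : ℝ => u ^ β :=
  (Real.continuous_rpow_const hβ).measurable

lemma meas_f (d : ℕ) {β : ℝ} (hβ : 0 ≤ β) :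
    Measurable fun x : Fin d → ℝ => dist2 x (fun _ => 0) ^ β := by
  have h1 : Measurable fun x : Fin d → ℝ => dist2 x (fun _ => 0) := by
    unfold dist2
    exact (Finset.measurable_sum _ fun i _ =>
      ((measurable_pi_apply i).sub measurable_const).pow_const 2).sqrt
  exact (meas_rpow hβ).comp h1

lemma dist2_rpow_eq (d : ℕ) (β : ℝ) (x : Fin d → ℝ) :
    dist2 x (fun _ => 0) ^ β = (∑ i, (x i) ^ 2) ^ (β / 2) := by
  unfold dist2
  simp only [sub_zero]
  rw [Real.sqrt_eq_rpow,
    ← Real.rpow_mul (Finset.sum_nonneg fun i _ => by positivity),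
    show (1/2:ℝ) * β = β/2 by ring]

lemma key (d : ℕ) (hd : 0 < d) {β : ℝ} (hβ0 : 0 < β) (hβ2 : β < 2)
    (x : Fin d → ℝ) (hx : ∀ i, x i ∈ Icc (0:ℝ) 1) :
    (d:ℝ) ^ (β/2 - 1) * ∑ i, x i ^ β ≤ dist2 x (fun _ => 0) ^ β := by
  have hd0 : (0:ℝ) < d := by exact_mod_cast hd
  rw [dist2_rpow_eq]
  have hp : (1:ℝ) ≤ 2 / β := by
    rw [le_div_iff₀ hβ0]; linarith
  have hsum1 : ∑ _i : Fin d, (d:ℝ)⁻¹ = 1 := by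
    rw [Finset.sum_const, Finset.card_univ, Fintype.card_fin, nsmul_eq_mul,
      mul_inv_cancel₀ hd0.ne']
  have h := Real.arith_mean_le_rpow_mean Finset.univ (fun _ => (d:ℝ)⁻¹)
    (fun i => x i ^ β) (fun i _ => by positivity) hsum1
    (fun i _ => Real.rpow_nonneg (hx i).1 β) hp
  have hz : ∀ i : Fin d, (x i ^ β) ^ (2/β) = x i ^ 2 := by
    intro i
    rw [← Real.rpow_natCast (x i) 2, ← Real.rpow_mul (hx i).1]
    congr 1
    push_cast
    field_simp
  simp only [hz] at h
  have h1d : (1:ℝ) / (2/β) = β/2 := by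
    field_simp
  rw [h1d, ← Finset.mul_sum, ← Finset.mul_sum,
    Real.mul_rpow (by positivity) (Finset.sum_nonneg fun i _ => by positivity)] at h
  calc (d:ℝ) ^ (β/2 - 1) * ∑ i, x i ^ β
      = (d:ℝ) ^ (β/2) * ((d:ℝ)⁻¹ * ∑ i, x i ^ β) := by
        rw [← mul_assoc, ← Real.rpow_neg_one (d:ℝ), ← Real.rpow_add hd0]
        ring_nf
    _ ≤ (d:ℝ) ^ (β/2) * (((d:ℝ)⁻¹) ^ (β/2) * (∑ i, x i ^ 2) ^ (β/2)) := by
        apply mul_le_mul_of_nonneg_left h (Real.rpow_nonneg hd0.le _)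
    _ = ((d:ℝ) * (d:ℝ)⁻¹) ^ (β/2) * (∑ i, x i ^ 2) ^ (β/2) := by
        rw [Real.mul_rpow hd0.le (by positivity), mul_assoc]
    _ = (∑ i, x i ^ 2) ^ (β/2) := by
        rw [mul_inv_cancel₀ hd0.ne', Real.one_rpow, one_mul]

lemma cplus_val (d : ℕ) {β : ℝ} (hβ0 : 0 < β) :
    SbY d β (CPlus d) (fun _ => 0) = (d:ℝ) ^ (β/2) * ∫ u, u ^ β ∂uniform01 := by
  have hT : Measurable fun u : ℝ => (fun _ : Fin d => u) :=
    measurable_pi_lambda _ fun _ => measurable_id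
  rw [SbY, CPlus, integral_map hT.aemeasurable (meas_f d hβ0.le).aestronglyMeasurable,
    ← integral_const_mul]
  apply integral_congr_ae
  filter_upwards [uniform01_ae_mem] with u hu
  rw [dist2_rpow_eq]
  simp only [Finset.sum_const, Finset.card_univ, Fintype.card_fin, nsmul_eq_mul]
  rw [Real.mul_rpow (Nat.cast_nonneg d) (by positivity), ← Real.rpow_natCast u 2,
    ← Real.rpow_mul hu.1, show ((2:ℕ):ℝ) * (β/2) = β by push_cast; ring]

/-- `C ↦ S_β(C,0)` attains its minimum over copulas at the upper
Fréchet bound `C⁺`: for every copula `C`, `S_β(C,0) ≥ S_β(C⁺,0)`. -/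
theorem stmt16 (d : ℕ) (β : ℝ) (hβ0 : 0 < β) (hβ2 : β < 2)
    (C : Measure (Fin d → ℝ)) (hC : IsCopula d C) :
    SbY d β C (fun _ => 0) ≥ SbY d β (CPlus d) (fun _ => 0) := by
  rcases Nat.eq_zero_or_pos d with hd | hd
  · subst hd
    simp [SbY, dist2, Real.zero_rpow hβ0.ne', le_refl]
  haveI : IsProbabilityMeasure C := hC.1
  have hd0 : (0:ℝ) < d := by exact_mod_cast hd
  set I := ∫ u, u ^ β ∂uniform01 with hI
  have hae : ∀ᵐ x ∂C, ∀ i, x i ∈ Icc (0:ℝ) 1 := by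
    rw [ae_all_iff]
    intro i
    rw [ae_iff]
    have hmap : C.map (fun x => x i) (Icc (0:ℝ) 1)ᶜ
        = C ((fun x : Fin d → ℝ => x i) ⁻¹' (Icc (0:ℝ) 1)ᶜ) :=
      Measure.map_apply (measurable_pi_apply i) measurableSet_Icc.compl
    have h0 : uniform01 (Icc (0:ℝ) 1)ᶜ = 0 := by
      rw [uniform01, Measure.restrict_apply measurableSet_Icc.compl]
      simp
    rw [hC.2 i, h0] at hmap
    rw [show {a : Fin d → ℝ | ¬ a i ∈ Icc (0:ℝ) 1}
        = (fun x : Fin d → ℝ => x i) ⁻¹' (Icc (0:ℝ) 1)ᶜ from rfl, ← hmap]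
  have hmeas_i : ∀ i : Fin d, Measurable fun x : Fin d → ℝ => x i ^ β :=
    fun i => (meas_rpow hβ0.le).comp (measurable_pi_apply i)
  have hgi : ∀ i : Fin d, Integrable (fun x => x i ^ β) C := by
    intro i
    apply Integrable.mono' (integrable_const (1:ℝ)) (hmeas_i i).aestronglyMeasurable
    filter_upwards [hae] with x hx
    rw [Real.norm_eq_abs, abs_of_nonneg (Real.rpow_nonneg (hx i).1 β)]
    exact Real.rpow_le_one (hx i).1 (hx i).2 hβ0.le
  have hf_int : Integrable (fun x => dist2 x (fun _ => 0) ^ β) C := by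
    apply Integrable.mono' (integrable_const (Real.sqrt d ^ β))
      (meas_f d hβ0.le).aestronglyMeasurable
    filter_upwards [hae] with x hx
    have h1 : (0:ℝ) ≤ dist2 x (fun _ => 0) := Real.sqrt_nonneg _
    rw [Real.norm_eq_abs, abs_of_nonneg (Real.rpow_nonneg h1 β)]
    apply Real.rpow_le_rpow h1 _ hβ0.le
    unfold dist2
    apply Real.sqrt_le_sqrt
    calc (∑ i, (x i - 0) ^ 2) ≤ ∑ _i : Fin d, (1:ℝ) := by
          apply Finset.sum_le_sum
          intro i _
          rw [sub_zero]
          nlinarith [(hx i).1, (hx i).2]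
      _ = (d:ℝ) := by simp
  have hg_int : Integrable (fun x => (d:ℝ) ^ (β/2 - 1) * ∑ i, x i ^ β) C :=
    (integrable_finset_sum _ fun i _ => hgi i).const_mul _
  have hmono : ∫ x, (d:ℝ) ^ (β/2 - 1) * ∑ i, x i ^ β ∂C ≤ SbY d β C (fun _ => 0) := by
    rw [SbY]
    apply integral_mono_ae hg_int hf_int
    filter_upwards [hae] with x hx
    exact key d hd hβ0 hβ2 x hx
  have hmarg : ∀ i : Fin d, ∫ x, x i ^ β ∂C = I := by
    intro i
    rw [hI, ← hC.2 i, integral_map (measurable_pi_apply i).aemeasurable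
      (meas_rpow hβ0.le).aestronglyMeasurable]
  have hgval : ∫ x, (d:ℝ) ^ (β/2 - 1) * ∑ i, x i ^ β ∂C = (d:ℝ) ^ (β/2) * I := by
    rw [integral_const_mul, integral_finset_sum _ fun i _ => hgi i]
    simp only [hmarg]
    rw [Finset.sum_const, Finset.card_univ, Fintype.card_fin, nsmul_eq_mul, ← mul_assoc]
    congr 1
    rw [← Real.rpow_add_one hd0.ne' (β/2 - 1)]
    congr 1
    ring
  rw [ge_iff_le, cplus_val d hβ0, ← hI, ← hgval]
  exact hmono
end
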